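/- arXiv:2207.14759 — 2 statements merged into one kernel-verified Lean document; each statement's English description precedes it below -/
import Mathlib

section
/- Let G' be obtained from the disjoint union of graphs G and H by identifying a vertex u of G with a vertex w of H. Then p(G'; z) = p(G; z)·p(H; z) − p_u(G; z)·p_w(H; z). -/
open Polynomial

variable {V : Type*}

/-- `M` (a finite set of edges) is a matching of the graph `G`:
its members are edges of `G` and no two distinct members share an endpoint. -/
def IsGraphMatching (G : SimpleGraph V) (M : Finset (Sym2 V)) : Prop :=
  (M : Set (Sym2 V)) ⊆ G.edgeSet ∧
    ∀ e ∈ M, ∀ f ∈ M, e ≠ f → ∀ x, x ∈ e → x ∉ f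

/-- The set of vertices covered by the edge set `M` is exactly `S`. -/
def Covers (M : Finset (Sym2 V)) (S : Finset V) : Prop :=
  ∀ x, x ∈ S ↔ ∃ e ∈ M, x ∈ e

/-- `M` is a perfect matching of the induced subgraph `G[S]`. -/
def IsPerfectMatchingOn (G : SimpleGraph V) (M : Finset (Sym2 V)) (S : Finset V) : Prop :=
  IsGraphMatching G M ∧ Covers M S

/-- `S` is a perfectly matchable set of `G`. -/
def IsPMS (G : SimpleGraph V) (S : Finset V) : Prop :=
  ∃ M, IsPerfectMatchingOn G M S

open Classical in
/-- The perfectly matchable set polynomial of the subgraph of `G` induced on the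
ground vertex set `A`: the generating function `∑ p_{2k} z^k` where `p_{2k}` is the number
of perfectly matchable sets `S ⊆ A` with `|S| = 2k`. -/
noncomputable def pmPoly [Fintype V] (G : SimpleGraph V) (A : Finset V) : Polynomial ℤ :=
  ∑ S ∈ A.powerset, if IsPMS G S then X ^ (S.card / 2) else 0

/-- `G` has no cycle of even length. -/
def NoEvenCycle (G : SimpleGraph V) : Prop :=
  ∀ (v : V) (c : G.Walk v v), c.IsCycle → ¬ Even c.length

/-!
A perfect matching of `G'` splits into perfect matchings of its two sides, the edge covering
the glue vertex `v` (if any) going to the side that contains it. Hence `S` is perfectly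
matchable iff `S ∩ A` and `S ∩ (B - v)` are, or `S ∩ (A - v)` and `S ∩ B` are; by parity both
alternatives hold only when `v ∉ S`. For disjoint `C`, `D` the generating function of the sets
`S ⊆ C ∪ D` with `S ∩ C` and `S ∩ D` perfectly matchable is `p(C) p(D)`, so inclusion–exclusion
gives `p(G') = p(A) p(B - v) + p(A - v) p(B) - p(A - v) p(B - v)`, which is the claimed identity.
-/

open Finset

section Matching

variable {G : SimpleGraph V} {M N : Finset (Sym2 V)} {S T : Finset V}

lemma IsGraphMatching.eq_of_mem_of_mem (hM : IsGraphMatching G M) {e f : Sym2 V} (he : e ∈ M)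
    (hf : f ∈ M) {x : V} (hxe : x ∈ e) (hxf : x ∈ f) : e = f :=
  by_contra fun hne => hM.2 e he f hf hne x hxe hxf

lemma IsGraphMatching.mono (hM : IsGraphMatching G M) (hNM : N ⊆ M) : IsGraphMatching G N :=
  ⟨(coe_subset.2 hNM).trans hM.1, fun e he f hf => hM.2 e (hNM he) f (hNM hf)⟩

lemma IsPMS.even_card [DecidableEq V] (h : IsPMS G S) : Even S.card := by
  obtain ⟨M, hM, hcov⟩ := h
  have hS : S = M.biUnion Sym2.toFinset := by
    ext x
    simp [hcov x]
  have hdisj : (M : Set (Sym2 V)).PairwiseDisjoint Sym2.toFinset := fun e he f hf hne =>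
    disjoint_left.2 fun x hxe hxf =>
      hM.2 e he f hf hne x (Sym2.mem_toFinset.1 hxe) (Sym2.mem_toFinset.1 hxf)
  rw [hS, card_biUnion hdisj, sum_congr rfl fun e he =>
    Sym2.card_toFinset_of_not_isDiag e (G.not_isDiag_of_mem_edgeSet (hM.1 he))]
  simp

lemma IsPMS.notMem_of_isPMS_erase [DecidableEq V] {v : V} (h : IsPMS G S)
    (h' : IsPMS G (S.erase v)) : v ∉ S := by
  intro hv
  have hcard := card_erase_add_one hv
  obtain ⟨a, ha⟩ := h.even_card
  obtain ⟨b, hb⟩ := h'.even_card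
  omega

lemma IsPMS.union [DecidableEq V] (hS : IsPMS G S) (hT : IsPMS G T) (hST : Disjoint S T) :
    IsPMS G (S ∪ T) := by
  obtain ⟨M, hM, hcovM⟩ := hS
  obtain ⟨N, hN, hcovN⟩ := hT
  refine ⟨M ∪ N, ⟨?_, ?_⟩, fun x => ?_⟩
  · rw [coe_union]
    exact Set.union_subset hM.1 hN.1
  · intro e he f hf hne x hxe hxf
    rcases mem_union.1 he with he | he <;> rcases mem_union.1 hf with hf | hf
    · exact hM.2 e he f hf hne x hxe hxf
    · exact disjoint_left.1 hST ((hcovM x).2 ⟨e, he, hxe⟩) ((hcovN x).2 ⟨f, hf, hxf⟩)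
    · exact disjoint_left.1 hST ((hcovM x).2 ⟨f, hf, hxf⟩) ((hcovN x).2 ⟨e, he, hxe⟩)
    · exact hN.2 e he f hf hne x hxe hxf
  · simp only [mem_union, hcovM x, hcovN x, or_and_right, exists_or]

lemma IsPMS.of_inter_of_inter [DecidableEq V] {C D : Finset V} (hCD : Disjoint C D)
    (hS : S ⊆ C ∪ D) (hC : IsPMS G (S ∩ C)) (hD : IsPMS G (S ∩ D)) : IsPMS G S := by
  simpa [← inter_union_distrib_left, inter_eq_left.2 hS] using
    hC.union hD (hCD.mono inter_subset_right inter_subset_right)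

lemma IsPerfectMatchingOn.isPMS_inter [DecidableEq V] (h : IsPerfectMatchingOn G M S)
    (hT : ∀ e ∈ M, ∀ x ∈ e, ∀ y ∈ e, x ∈ T → y ∈ T) : IsPMS G (S ∩ T) := by
  classical
  refine ⟨M.filter fun e => ∀ y ∈ e, y ∈ T, h.1.mono (filter_subset _ _), fun x => ?_⟩
  simp only [mem_inter, h.2 x, mem_filter]
  constructor
  · rintro ⟨⟨e, he, hxe⟩, hxT⟩
    exact ⟨e, ⟨he, fun y hy => hT e he x hxe y hy hxT⟩, hxe⟩
  · rintro ⟨e, ⟨he, heT⟩, hxe⟩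
    exact ⟨⟨e, he, hxe⟩, heT x hxe⟩

end Matching

lemma sum_powerset_erase {R : Type*} [AddCommMonoid R] [DecidableEq V] (U : Finset V) (v : V)
    (f : Finset V → R) :
    ∑ S ∈ (U.erase v).powerset, f S = ∑ S ∈ U.powerset, if v ∉ S then f S else 0 := by
  rw [← sum_filter]
  congr 1
  ext S
  simp [subset_erase]

open Classical in
lemma pmPoly_mul_pmPoly [Fintype V] [DecidableEq V] (G : SimpleGraph V) {C D : Finset V}
    (hCD : Disjoint C D) :
    pmPoly G C * pmPoly G D = ∑ S ∈ (C ∪ D).powerset,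
      if IsPMS G (S ∩ C) ∧ IsPMS G (S ∩ D) then (X : ℤ[X]) ^ (S.card / 2) else 0 := by
  have hsplit : ∀ p ∈ C.powerset ×ˢ D.powerset,
      (p.1 ∪ p.2) ∩ C = p.1 ∧ (p.1 ∪ p.2) ∩ D = p.2 := by
    intro p hp
    simp only [mem_product, mem_powerset] at hp
    rw [union_inter_distrib_right, union_inter_distrib_right, inter_eq_left.2 hp.1,
      inter_eq_left.2 hp.2, disjoint_iff_inter_eq_empty.1 (hCD.symm.mono_left hp.2),
      disjoint_iff_inter_eq_empty.1 (hCD.mono_left hp.1)]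
    simp
  rw [pmPoly, pmPoly, sum_mul_sum, ← sum_product']
  refine sum_nbij' (fun p => p.1 ∪ p.2) (fun S => (S ∩ C, S ∩ D)) ?_ ?_ ?_ ?_ ?_
  · intro p hp
    simp only [mem_product, mem_powerset] at hp ⊢
    exact union_subset_union hp.1 hp.2
  · intro S _
    simp only [mem_product, mem_powerset]
    exact ⟨inter_subset_right, inter_subset_right⟩
  · intro p hp
    simp only [hsplit p hp]
  · intro S hS
    simp only [← inter_union_distrib_left, inter_eq_left.2 (mem_powerset.1 hS)]
  · intro p hp
    simp only [hsplit p hp]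
    by_cases h₁ : IsPMS G p.1 <;> by_cases h₂ : IsPMS G p.2 <;> simp only [h₁, h₂, and_self,
      and_true, and_false, if_true, if_false, mul_zero, zero_mul]
    obtain ⟨a, ha⟩ := h₁.even_card
    obtain ⟨b, hb⟩ := h₂.even_card
    have hdisj : Disjoint p.1 p.2 := by
      simp only [mem_product, mem_powerset] at hp
      exact hCD.mono hp.1 hp.2
    rw [card_union_of_disjoint hdisj, ha, hb, ← pow_add]
    congr 1
    omega

section Gluing

variable {G : SimpleGraph V} {A B S : Finset V} {v : V}

lemma forall_mem_or_forall_mem_of_mem_edgeSet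
    (hedges : ∀ a b, G.Adj a b → (a ∈ A ∧ b ∈ A) ∨ (a ∈ B ∧ b ∈ B)) {e : Sym2 V}
    (he : e ∈ G.edgeSet) : (∀ x ∈ e, x ∈ A) ∨ (∀ x ∈ e, x ∈ B) := by
  induction e with
  | _ a b =>
    rcases hedges a b he with ⟨ha, hb⟩ | ⟨ha, hb⟩
    · exact Or.inl fun x hx => by rcases Sym2.mem_iff.1 hx with rfl | rfl <;> assumption
    · exact Or.inr fun x hx => by rcases Sym2.mem_iff.1 hx with rfl | rfl <;> assumption

variable [DecidableEq V]

lemma mem_and_mem_of_inter_eq_singleton (hAB : A ∩ B = {v}) : v ∈ A ∧ v ∈ B :=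
  mem_inter.1 (hAB ▸ mem_singleton_self v)

lemma disjoint_erase_of_inter_eq_singleton (hAB : A ∩ B = {v}) : Disjoint A (B.erase v) := by
  rw [disjoint_iff_inter_eq_empty, inter_erase, hAB, erase_singleton]

lemma isPMS_inter_and_isPMS_inter_erase_of_forall_mem {M : Finset (Sym2 V)}
    (hAB : A ∩ B = {v})
    (hedges : ∀ a b, G.Adj a b → (a ∈ A ∧ b ∈ A) ∨ (a ∈ B ∧ b ∈ B))
    (hM : IsPerfectMatchingOn G M S) (hv : ∀ e ∈ M, v ∈ e → ∀ x ∈ e, x ∈ A) :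
    IsPMS G (S ∩ A) ∧ IsPMS G (S ∩ B.erase v) := by
  have hAB' : ∀ x ∈ A, x ∈ B → x = v := fun x hxA hxB =>
    mem_singleton.1 (hAB ▸ mem_inter.2 ⟨hxA, hxB⟩)
  have hside := fun e (he : e ∈ M) => forall_mem_or_forall_mem_of_mem_edgeSet hedges (hM.1.1 he)
  constructor
  · refine hM.isPMS_inter fun e he x hx y hy hxA => ?_
    rcases hside e he with heA | heB
    · exact heA y hy
    · exact hv e he (hAB' x hxA (heB x hx) ▸ hx) y hy
  · refine hM.isPMS_inter fun e he x hx y hy hxT => ?_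
    obtain ⟨hxv, hxB⟩ := mem_erase.1 hxT
    rcases hside e he with heA | heB
    · exact absurd (hAB' x (heA x hx) hxB) hxv
    · refine mem_erase.2 ⟨?_, heB y hy⟩
      rintro rfl
      exact hxv (hAB' x (hv e he hy x hx) hxB)

lemma isPMS_iff_of_inter_eq_singleton (hAB : A ∩ B = {v}) (hS : S ⊆ A ∪ B)
    (hedges : ∀ a b, G.Adj a b → (a ∈ A ∧ b ∈ A) ∨ (a ∈ B ∧ b ∈ B)) :
    IsPMS G S ↔ (IsPMS G (S ∩ A) ∧ IsPMS G (S ∩ B.erase v)) ∨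
      (IsPMS G (S ∩ A.erase v) ∧ IsPMS G (S ∩ B)) := by
  have hBA : B ∩ A = {v} := inter_comm A B ▸ hAB
  obtain ⟨hvA, hvB⟩ := mem_and_mem_of_inter_eq_singleton hAB
  constructor
  · rintro ⟨M, hM⟩
    by_cases hv : ∀ e ∈ M, v ∈ e → ∀ x ∈ e, x ∈ A
    · exact Or.inl (isPMS_inter_and_isPMS_inter_erase_of_forall_mem hAB hedges hM hv)
    · push Not at hv
      obtain ⟨e₀, he₀, hve₀, x, hx, hxA⟩ := hv
      have he₀B : ∀ x ∈ e₀, x ∈ B :=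
        (forall_mem_or_forall_mem_of_mem_edgeSet hedges (hM.1.1 he₀)).resolve_left
          fun h => hxA (h x hx)
      have hvB : ∀ e ∈ M, v ∈ e → ∀ x ∈ e, x ∈ B := fun e he hve =>
        hM.1.eq_of_mem_of_mem he he₀ hve hve₀ ▸ he₀B
      exact Or.inr (isPMS_inter_and_isPMS_inter_erase_of_forall_mem hBA
        (fun a b hab => (hedges a b hab).symm) hM hvB).symm
  · rintro (⟨hA, hB⟩ | ⟨hA, hB⟩)
    · exact IsPMS.of_inter_of_inter (disjoint_erase_of_inter_eq_singleton hAB)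
        (union_erase_of_mem hvA B ▸ hS) hA hB
    · exact IsPMS.of_inter_of_inter (disjoint_erase_of_inter_eq_singleton hBA).symm
        (erase_union_of_mem hvB A ▸ hS) hA hB

lemma notMem_of_isPMS_inter_of_isPMS_inter_erase (hvA : v ∈ A) (h : IsPMS G (S ∩ A))
    (h' : IsPMS G (S ∩ A.erase v)) : v ∉ S := fun hv =>
  h.notMem_of_isPMS_erase (inter_erase v S A ▸ h') (mem_inter.2 ⟨hv, hvA⟩)

open Classical in
lemma ite_isPMS_eq_of_inter_eq_singleton {R : Type*} [AddCommGroup R] (hAB : A ∩ B = {v})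
    (hS : S ⊆ A ∪ B)
    (hedges : ∀ a b, G.Adj a b → (a ∈ A ∧ b ∈ A) ∨ (a ∈ B ∧ b ∈ B)) (r : R) :
    (if IsPMS G S then r else 0) =
      (if IsPMS G (S ∩ A) ∧ IsPMS G (S ∩ B.erase v) then r else 0) +
        (if IsPMS G (S ∩ A.erase v) ∧ IsPMS G (S ∩ B) then r else 0) -
        if v ∉ S then (if IsPMS G (S ∩ A.erase v) ∧ IsPMS G (S ∩ B.erase v) then r else 0)
          else 0 := by
  have hvA := (mem_and_mem_of_inter_eq_singleton hAB).1
  simp only [isPMS_iff_of_inter_eq_singleton hAB hS hedges]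
  by_cases hv : v ∈ S
  · have hnot : ¬ ((IsPMS G (S ∩ A) ∧ IsPMS G (S ∩ B.erase v)) ∧
        (IsPMS G (S ∩ A.erase v) ∧ IsPMS G (S ∩ B))) := fun ⟨⟨h, _⟩, h', _⟩ =>
      notMem_of_isPMS_inter_of_isPMS_inter_erase hvA h h' hv
    split_ifs <;> simp_all
  · have hAv : v ∉ S ∩ A := fun h => hv (mem_of_mem_inter_left h)
    have hBv : v ∉ S ∩ B := fun h => hv (mem_of_mem_inter_left h)
    simp only [inter_erase, erase_eq_of_notMem hAv, erase_eq_of_notMem hBv, or_self, hv]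
    simp

end Gluing

/-- if `G'` is obtained by gluing the graph induced on `A` and the graph
induced on `B` at the single shared vertex `v` (so `G = G'[A]`, `H = G'[B]`), then
`p(G'; z) = p(G; z)·p(H; z) − p_v(G; z)·p_v(H; z)`. -/
theorem stmt7 [Fintype V] [DecidableEq V] (G' : SimpleGraph V) (A B : Finset V) (v : V)
    (hAB : A ∩ B = {v}) (hcover : A ∪ B = Finset.univ)
    (hedges : ∀ a b, G'.Adj a b → (a ∈ A ∧ b ∈ A) ∨ (a ∈ B ∧ b ∈ B)) :
    pmPoly G' Finset.univ =
      pmPoly G' A * pmPoly G' B -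
        (pmPoly G' A - pmPoly G' (A.erase v)) * (pmPoly G' B - pmPoly G' (B.erase v)) := by
  classical
  obtain ⟨hvA, hvB⟩ := mem_and_mem_of_inter_eq_singleton hAB
  have hdisj := disjoint_erase_of_inter_eq_singleton hAB
  have hsplit : pmPoly G' Finset.univ =
      pmPoly G' A * pmPoly G' (B.erase v) + pmPoly G' (A.erase v) * pmPoly G' B -
        pmPoly G' (A.erase v) * pmPoly G' (B.erase v) := by
    rw [pmPoly_mul_pmPoly G' hdisj,
      pmPoly_mul_pmPoly G' (disjoint_erase_of_inter_eq_singleton (inter_comm A B ▸ hAB)).symm,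
      pmPoly_mul_pmPoly G' (hdisj.mono_left (erase_subset v A)),
      union_erase_of_mem hvA, erase_union_of_mem hvB, ← erase_union_distrib, hcover,
      sum_powerset_erase, pmPoly, ← sum_add_distrib, ← sum_sub_distrib]
    exact sum_congr rfl fun S _ =>
      ite_isPMS_eq_of_inter_eq_singleton hAB (hcover ▸ subset_univ S) hedges _
  rw [hsplit]
  ring
end

section
/- The polynomials p(C_{2k}; z) satisfy the recurrence p(C_{2k}; z) = (1+2z)·p(C_{2k−2}; z) − z²·p(C_{2k−4}; z) + z^{k−1} for k ≥ 3. -/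
open Polynomial

variable {V : Type*}

/-!
A vertex set `S` of the cycle `C_n` has a perfect matching exactly when it is a disjoint union
of dominoes `{i, i + 1}`, i.e. the domino support of a cyclically independent set `D` of left
endpoints. Walking around the cycle from a vertex outside `S` shows that `D` is determined by `S`,
unless `S` is the whole cycle: for even `n` that has exactly the two tilings "evens" and "odds".
Hence `p(C_{2k}; z) = I(C_{2k}; z) - z ^ k` with `I` the independence polynomial.

Splitting on the last vertex, `I(C_{n+2}) = I(P_{n+1}) + z I(P_n)` and
`I(P_{m+2}) = I(P_{m+1}) + z I(P_m)`, so `I(C_n)` obeys the path recurrence as well; applying it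
twice gives `I(C_{2k}) = (1 + 2z) I(C_{2k-2}) - z² I(C_{2k-4})`. The correction term `z ^ (k - 1)`
is what `z ^ k` misses in this recurrence.
-/

open Finset

theorem sum_pow_card_eq_filter_notMem_add_mul {α R : Type*} [DecidableEq α] [Semiring R] (x : R)
    {F G : Finset (Finset α)} (t : α) (hG : ∀ E, E ∈ G ↔ t ∉ E ∧ insert t E ∈ F) :
    ∑ D ∈ F, x ^ #D = ∑ D ∈ F with t ∉ D, x ^ #D + x * ∑ E ∈ G, x ^ #E := by
  rw [← sum_filter_not_add_sum_filter F (t ∈ ·), mul_sum]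
  congr 1
  refine sum_nbij' (erase · t) (insert t) (fun D hD => ?_) (fun E hE => ?_)
    (fun D hD => ?_) (fun E hE => ?_) (fun D hD => ?_)
  · rw [mem_filter] at hD
    exact (hG _).2 ⟨notMem_erase t D, by rw [insert_erase hD.2]; exact hD.1⟩
  · exact mem_filter.2 ⟨((hG E).1 hE).2, mem_insert_self t E⟩
  · exact insert_erase (mem_filter.1 hD).2
  · exact erase_insert ((hG E).1 hE).1
  · rw [← pow_succ', card_erase_add_one (mem_filter.1 hD).2]

noncomputable def pathIndepPoly (a b : ℕ) : ℤ[X] :=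
  ∑ D ∈ (Ico a b).powerset with ∀ i ∈ D, i + 1 ∉ D, X ^ #D

noncomputable def cycleIndepPoly (n : ℕ) : ℤ[X] :=
  ∑ D ∈ (range n).powerset with (∀ i ∈ D, i + 1 ∉ D) ∧ ¬(0 ∈ D ∧ n - 1 ∈ D),
    X ^ #D

theorem pathIndepPoly_add_two {a b : ℕ} (h : a ≤ b + 1) :
    pathIndepPoly a (b + 2) = pathIndepPoly a (b + 1) + X * pathIndepPoly a b := by
  rw [pathIndepPoly, sum_pow_card_eq_filter_notMem_add_mul X (b + 1)]
  · congr 2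
    ext D
    simp only [mem_filter, mem_powerset, subset_iff, mem_Ico]
    grind
  · intro E
    simp only [mem_filter, mem_powerset, subset_iff, mem_Ico, mem_insert, forall_eq_or_imp]
    grind

theorem cycleIndepPoly_add_two (n : ℕ) :
    cycleIndepPoly (n + 2) = pathIndepPoly 0 (n + 1) + X * pathIndepPoly 1 n := by
  rw [cycleIndepPoly, sum_pow_card_eq_filter_notMem_add_mul X (n + 1)]
  · congr 2
    ext D
    simp only [mem_filter, mem_powerset, subset_iff, mem_Ico, mem_range]
    grind
  · intro E
    simp only [mem_filter, mem_powerset, subset_iff, mem_Ico, mem_insert, forall_eq_or_imp,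
      mem_range]
    grind

theorem cycleIndepPoly_add_four (n : ℕ) :
    cycleIndepPoly (n + 4) = cycleIndepPoly (n + 3) + X * cycleIndepPoly (n + 2) := by
  rw [cycleIndepPoly_add_two, cycleIndepPoly_add_two, cycleIndepPoly_add_two,
    pathIndepPoly_add_two (a := 0) (b := n + 1) (by omega),
    pathIndepPoly_add_two (a := 1) (b := n) (by omega)]
  ring

theorem cycleIndepPoly_add_six (n : ℕ) :
    cycleIndepPoly (n + 6) =
      (1 + 2 * X) * cycleIndepPoly (n + 4) - X ^ 2 * cycleIndepPoly (n + 2) := by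
  have h6 : cycleIndepPoly (n + 6) = cycleIndepPoly (n + 5) + X * cycleIndepPoly (n + 4) :=
    cycleIndepPoly_add_four (n + 2)
  have h5 : cycleIndepPoly (n + 5) = cycleIndepPoly (n + 4) + X * cycleIndepPoly (n + 3) :=
    cycleIndepPoly_add_four (n + 1)
  linear_combination h6 + h5 - X * cycleIndepPoly_add_four n

section CycleIndep

variable {n : ℕ}

def IsCycleIndep (D : Finset (Fin (n + 2))) : Prop := ∀ i ∈ D, i + 1 ∉ D

instance : DecidablePred (IsCycleIndep (n := n)) := fun D =>
  inferInstanceAs (Decidable (∀ i ∈ D, i + 1 ∉ D))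

theorem isCycleIndep_iff_map_val {D : Finset (Fin (n + 2))} :
    IsCycleIndep D ↔ (∀ i ∈ D.map Fin.valEmbedding, i + 1 ∉ D.map Fin.valEmbedding) ∧
      ¬(0 ∈ D.map Fin.valEmbedding ∧ n + 1 ∈ D.map Fin.valEmbedding) := by
  simp only [IsCycleIndep, mem_map, Fin.valEmbedding_apply, forall_exists_index, and_imp,
    forall_apply_eq_imp_iff₂]
  constructor
  · intro h
    refine ⟨fun i hi ⟨j, hj, hji⟩ => h i hi ?_, fun ⟨⟨j, hj, hj0⟩, k, hk, hkn⟩ => h k hk ?_⟩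
    all_goals
      convert hj
      ext
      rw [Fin.val_add_one]
      grind
  · rintro ⟨h1, h2⟩ i hi hi1
    have := Fin.val_add_one i
    split_ifs at this with hl
    · exact h2 ⟨⟨_, hi1, this⟩, ⟨i, hi, by simp [hl]⟩⟩
    · exact h1 i hi ⟨_, hi1, this⟩

end CycleIndep

theorem cycleIndepPoly_add_two_eq_sum (n : ℕ) :
    cycleIndepPoly (n + 2) = ∑ D : Finset (Fin (n + 2)) with IsCycleIndep D, X ^ #D := by
  symm
  refine sum_nbij (·.map Fin.valEmbedding) (fun D hD => ?_)
    (fun D _ D' _ h => map_injective _ h) (fun E hE => ?_) (fun D _ => by rw [card_map])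
  · simp only [mem_filter, mem_univ, true_and, isCycleIndep_iff_map_val] at hD
    simpa [subset_iff] using hD
  · rw [mem_coe, mem_filter, mem_powerset] at hE
    have hmap : ({i : Fin (n + 2) | i.val ∈ E} : Finset _).map Fin.valEmbedding = E := by
      ext a
      simp only [mem_map, mem_filter, mem_univ, true_and, Fin.valEmbedding_apply]
      exact ⟨by rintro ⟨i, hi, rfl⟩; exact hi, fun ha => ⟨⟨a, by simpa using hE.1 ha⟩, ha, rfl⟩⟩
    refine ⟨_, ?_, hmap⟩
    rw [mem_coe, mem_filter, isCycleIndep_iff_map_val, hmap]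
    simpa using hE.2

section Dominoes

variable {n : ℕ}

def dominoSupport (D : Finset (Fin (n + 2))) : Finset (Fin (n + 2)) := D ∪ D.image (· + 1)

theorem mem_dominoSupport {D : Finset (Fin (n + 2))} {x : Fin (n + 2)} :
    x ∈ dominoSupport D ↔ x ∈ D ∨ x - 1 ∈ D := by
  simp only [dominoSupport, mem_union, mem_image, ← eq_sub_iff_add_eq, exists_eq_right]

theorem subset_dominoSupport (D : Finset (Fin (n + 2))) : D ⊆ dominoSupport D :=
  subset_union_left

theorem IsCycleIndep.card_dominoSupport {D : Finset (Fin (n + 2))} (hD : IsCycleIndep D) :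
    #(dominoSupport D) = 2 * #D := by
  rw [dominoSupport, card_union_of_disjoint, card_image_of_injective _ (add_left_injective 1),
    two_mul]
  simp only [disjoint_left, mem_image]
  rintro _ hi ⟨j, hj, rfl⟩
  exact hD j hj hi

theorem IsCycleIndep.add_one_mem_iff {D : Finset (Fin (n + 2))} (hD : IsCycleIndep D)
    (i : Fin (n + 2)) : i + 1 ∈ D ↔ i + 1 ∈ dominoSupport D ∧ i ∉ D := by
  rw [mem_dominoSupport, add_sub_cancel_right]
  exact ⟨fun h => ⟨.inl h, fun hi => hD i hi h⟩, fun ⟨h, hi⟩ => h.resolve_right hi⟩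

theorem IsCycleIndep.eq_of_dominoSupport_eq {D D' : Finset (Fin (n + 2))} (hD : IsCycleIndep D)
    (hD' : IsCycleIndep D') (h : dominoSupport D = dominoSupport D') {g : Fin (n + 2)}
    (hg : g ∈ D ↔ g ∈ D') : D = D' := by
  have key (i : Fin (n + 2)) : g + i ∈ D ↔ g + i ∈ D' := by
    induction i using Fin.induction with
    | zero => simpa using hg
    | succ i ih =>
      rw [← Fin.coeSucc_eq_succ, ← add_assoc, hD.add_one_mem_iff, hD'.add_one_mem_iff, h, ih]
  ext i
  simpa using key (i - g)

theorem exists_eq_mk_add_one_of_mem_edgeSet_cycleGraph {e : Sym2 (Fin (n + 2))}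
    (he : e ∈ (SimpleGraph.cycleGraph (n + 2)).edgeSet) : ∃ i, e = s(i, i + 1) := by
  induction e using Sym2.inductionOn with
  | hf a b =>
    rw [SimpleGraph.mem_edgeSet, SimpleGraph.cycleGraph_adj, sub_eq_iff_eq_add,
      sub_eq_iff_eq_add] at he
    rcases he with rfl | rfl
    · exact ⟨b, by rw [add_comm 1 b, Sym2.eq_swap]⟩
    · exact ⟨a, by rw [add_comm 1 a]⟩

theorem IsCycleIndep.isPMS_dominoSupport {D : Finset (Fin (n + 2))} (hD : IsCycleIndep D) :
    IsPMS (SimpleGraph.cycleGraph (n + 2)) (dominoSupport D) := by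
  refine ⟨D.image fun i => s(i, i + 1), ⟨?_, ?_⟩, fun x => ?_⟩
  · intro e he
    obtain ⟨i, -, rfl⟩ := mem_image.1 he
    simp [SimpleGraph.cycleGraph_adj]
  · simp only [mem_image]
    rintro _ ⟨i, hi, rfl⟩ _ ⟨j, hj, rfl⟩ hij x hxi hxj
    simp only [Sym2.mem_iff] at hxi hxj
    obtain rfl | rfl := hxi <;> obtain h | h := hxj
    all_goals grind [IsCycleIndep]
  · simp only [mem_dominoSupport, mem_image, exists_exists_and_eq_and, Sym2.mem_iff]
    grind

theorem exists_dominoSupport_eq {S : Finset (Fin (n + 2))}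
    (hS : IsPMS (SimpleGraph.cycleGraph (n + 2)) S) :
    ∃ D, IsCycleIndep D ∧ dominoSupport D = S := by
  obtain ⟨M, ⟨hMG, hM⟩, hMS⟩ := hS
  rcases n with _ | n
  -- the single edge of `C_2` is both `s(0, 1)` and `s(1, 0)`, so fix the tiling `{0}` by hand
  · rcases S.eq_empty_or_nonempty with rfl | ⟨x, hx⟩
    · exact ⟨∅, by simp [IsCycleIndep], by simp [dominoSupport]⟩
    refine ⟨{0}, by simp [IsCycleIndep], ?_⟩
    obtain ⟨e, he, hxe⟩ := (hMS x).1 hx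
    obtain ⟨i, rfl⟩ := exists_eq_mk_add_one_of_mem_edgeSet_cycleGraph (hMG he)
    have hi : i ∈ S := (hMS i).2 ⟨_, he, Sym2.mem_mk_left _ _⟩
    have hi1 : i + 1 ∈ S := (hMS _).2 ⟨_, he, Sym2.mem_mk_right _ _⟩
    ext y
    simp only [mem_dominoSupport]
    fin_cases i <;> fin_cases y <;> simp_all
  · refine ⟨({i | s(i, i + 1) ∈ M} : Finset _), fun i hi hi1 => ?_, ?_⟩
    · simp only [mem_filter, mem_univ, true_and] at hi hi1
      refine hM _ hi _ hi1 ?_ (i + 1) (Sym2.mem_mk_right _ _) (Sym2.mem_mk_left _ _)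
      rw [Ne, Sym2.eq_iff]
      simp [add_assoc, Fin.ext_iff, Fin.val_add, Nat.mod_eq_of_lt]
    · ext x
      rw [mem_dominoSupport, hMS]
      simp only [mem_filter, mem_univ, true_and]
      constructor
      · rintro (h | h)
        · exact ⟨_, h, Sym2.mem_mk_left _ _⟩
        · exact ⟨_, h, by simp⟩
      · rintro ⟨e, he, hxe⟩
        obtain ⟨i, rfl⟩ := exists_eq_mk_add_one_of_mem_edgeSet_cycleGraph (hMG he)
        rcases Sym2.mem_iff.1 hxe with rfl | rfl
        · exact .inl he
        · simpa using Or.inr he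

theorem card_filter_dominoSupport_eq_of_ne_univ {S : Finset (Fin (n + 2))}
    (hS : IsPMS (SimpleGraph.cycleGraph (n + 2)) S) (hne : S ≠ univ) :
    #{D | IsCycleIndep D ∧ dominoSupport D = S} = 1 := by
  obtain ⟨D, hD, rfl⟩ := exists_dominoSupport_eq hS
  obtain ⟨g, hg⟩ : ∃ g, g ∉ dominoSupport D := by simpa [eq_univ_iff_forall] using hne
  refine card_eq_one.2 ⟨D, eq_singleton_iff_unique_mem.2 ⟨by simp [hD], fun D' hD' => ?_⟩⟩
  rw [mem_filter] at hD'
  refine hD'.2.1.eq_of_dominoSupport_eq hD hD'.2.2 (g := g) (iff_of_false ?_ ?_)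
  · exact fun h => hg (hD'.2.2 ▸ subset_dominoSupport D' h)
  · exact fun h => hg (subset_dominoSupport D h)

theorem isCycleIndep_and_dominoSupport_eq_univ_iff {D : Finset (Fin (n + 2))} :
    IsCycleIndep D ∧ dominoSupport D = univ ↔ ∀ i, i + 1 ∈ D ↔ i ∉ D := by
  constructor
  · rintro ⟨hD, hsupp⟩ i
    simp [hD.add_one_mem_iff, hsupp]
  · intro h
    refine ⟨fun i hi => by simpa [h] using hi, eq_univ_of_forall fun x => ?_⟩
    have := h (x - 1)
    rw [sub_add_cancel] at this
    rw [mem_dominoSupport]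
    tauto

theorem card_filter_dominoSupport_eq_univ (hn : Even n) :
    #{D : Finset (Fin (n + 2)) | IsCycleIndep D ∧ dominoSupport D = univ} = 2 := by
  set E : Finset (Fin (n + 2)) := {i | Even i.val}
  have hE : ∀ i, i + 1 ∈ E ↔ i ∉ E := by
    intro i
    simp [E, Fin.val_add, Even.mod_even_iff (hn.add even_two), Nat.even_add_one]
  have hEc : ∀ i, i + 1 ∈ Eᶜ ↔ i ∉ Eᶜ := fun i => by rw [mem_compl, mem_compl, hE]
  have h0 : (0 : Fin (n + 2)) ∈ E := by simp [E]
  have hE' := isCycleIndep_and_dominoSupport_eq_univ_iff.2 hE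
  have hEc' := isCycleIndep_and_dominoSupport_eq_univ_iff.2 hEc
  trans #{E, Eᶜ}
  · congr 1
    ext D
    simp only [mem_filter, mem_univ, true_and, mem_insert, mem_singleton]
    constructor
    · intro hD
      by_cases h : 0 ∈ D
      · exact .inl (hD.1.eq_of_dominoSupport_eq hE'.1 (hD.2.trans hE'.2.symm)
          (iff_of_true h h0))
      · exact .inr (hD.1.eq_of_dominoSupport_eq hEc'.1 (hD.2.trans hEc'.2.symm)
          (iff_of_false h (by simpa using h0)))
    · rintro (rfl | rfl)
      exacts [hE', hEc']
  · exact card_pair ne_compl_self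

theorem isPMS_univ_cycleGraph (hn : Even n) : IsPMS (SimpleGraph.cycleGraph (n + 2)) univ := by
  obtain ⟨D, hD⟩ :
      ({D | IsCycleIndep D ∧ dominoSupport D = univ} : Finset (Finset (Fin (n + 2)))).Nonempty := by
    rw [← card_pos, card_filter_dominoSupport_eq_univ hn]
    norm_num
  rw [mem_filter] at hD
  exact hD.2.2 ▸ hD.2.1.isPMS_dominoSupport

theorem sum_filter_dominoSupport_eq (hn : Even n) {S : Finset (Fin (n + 2))}
    (hS : IsPMS (SimpleGraph.cycleGraph (n + 2)) S) :
    ∑ D with IsCycleIndep D ∧ dominoSupport D = S, (X : ℤ[X]) ^ #D =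
      X ^ (#S / 2) + if S = univ then X ^ (#S / 2) else 0 := by
  have hcard : ∀ D ∈ ({D | IsCycleIndep D ∧ dominoSupport D = S} : Finset (Finset _)),
      (X : ℤ[X]) ^ #D = X ^ (#S / 2) := by
    intro D hD
    rw [mem_filter] at hD
    rw [← hD.2.2, hD.2.1.card_dominoSupport, Nat.mul_div_cancel_left _ two_pos]
  rw [sum_congr rfl hcard, sum_const, nsmul_eq_mul]
  split_ifs with h
  · rw [h, card_filter_dominoSupport_eq_univ hn]
    ring
  · rw [card_filter_dominoSupport_eq_of_ne_univ hS h]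
    simp

end Dominoes

theorem pmPoly_cycleGraph_two_mul_add_two (j : ℕ) :
    pmPoly (SimpleGraph.cycleGraph (2 * j + 2)) univ =
      cycleIndepPoly (2 * j + 2) - X ^ (j + 1) := by
  classical
  set P : Finset (Finset (Fin (2 * j + 2))) := {S | IsPMS (SimpleGraph.cycleGraph (2 * j + 2)) S}
  have hmaps : ∀ D ∈ ({D | IsCycleIndep D} : Finset (Finset (Fin (2 * j + 2)))),
      dominoSupport D ∈ P := by
    intro D hD
    simp only [mem_filter, mem_univ, true_and, P] at hD ⊢
    exact hD.isPMS_dominoSupport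
  have hfiber (S : Finset (Fin (2 * j + 2))) (hS : S ∈ P) :
      ∑ D ∈ {D | IsCycleIndep D} with dominoSupport D = S, X ^ #D =
        (X : ℤ[X]) ^ (#S / 2) + if S = univ then X ^ (#S / 2) else 0 := by
    rw [filter_filter]
    exact sum_filter_dominoSupport_eq (even_two_mul j) (mem_filter.1 hS).2
  have huniv : univ ∈ P := mem_filter.2 ⟨mem_univ _, isPMS_univ_cycleGraph (even_two_mul j)⟩
  rw [pmPoly, powerset_univ, ← sum_filter, cycleIndepPoly_add_two_eq_sum,
    ← sum_fiberwise_of_maps_to hmaps, sum_congr rfl hfiber, sum_add_distrib, sum_ite_eq',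
    if_pos huniv, card_univ, Fintype.card_fin, show (2 * j + 2) / 2 = j + 1 by omega]
  ring

/-- for `k ≥ 3`,
`p(C_{2k}; z) = (1+2z)·p(C_{2k−2}; z) − z²·p(C_{2k−4}; z) + z^{k−1}`. -/
theorem stmt12 (k : ℕ) (hk : 3 ≤ k) :
    pmPoly (SimpleGraph.cycleGraph (2 * k)) Finset.univ =
      (1 + 2 * X) * pmPoly (SimpleGraph.cycleGraph (2 * k - 2)) Finset.univ -
        X ^ 2 * pmPoly (SimpleGraph.cycleGraph (2 * k - 4)) Finset.univ + X ^ (k - 1) := by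
  obtain ⟨m, rfl⟩ : ∃ m, k = m + 3 := ⟨k - 3, by omega⟩
  rw [show 2 * (m + 3) = 2 * (m + 2) + 2 by ring,
    show 2 * (m + 2) + 2 - 2 = 2 * (m + 1) + 2 by omega,
    show 2 * (m + 2) + 2 - 4 = 2 * m + 2 by omega,
    pmPoly_cycleGraph_two_mul_add_two, pmPoly_cycleGraph_two_mul_add_two,
    pmPoly_cycleGraph_two_mul_add_two,
    show 2 * (m + 2) + 2 = 2 * m + 6 by ring, show 2 * (m + 1) + 2 = 2 * m + 4 by ring,
    cycleIndepPoly_add_six, show m + 3 - 1 = m + 2 by omega]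
  ring
end
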